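/- arXiv:0808.1149 — 6 statements merged into one kernel-verified Lean document; each statement's English description precedes it below -/
import Mathlib

section
/- Besag's identity: Let X_1,...,X_n be discrete random variables with a strictly positive joint probability function P. Then for any two states x = (x_1,...,x_n) and y = (y_1,...,y_n), P(x)/P(y) = ∏_{i=1}^n P(x_i | x_1,...,x_{i-1}, y_{i+1},...,y_n) / P(y_i | x_1,...,x_{i-1}, y_{i+1},...,y_n), where P(z_i | w) denotes the conditional probability of the i-th coordinate being z_i given the other coordinates equal w. -/
/-- Besag's identity: for a strictly positive joint distribution `P` on a finite product
space, `P(x)/P(y) = ∏ᵢ P(xᵢ | x₁..x_{i-1}, y_{i+1}..y_n) / P(yᵢ | x₁..x_{i-1}, y_{i+1}..y_n)`,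
where the conditional of the i-th coordinate given the others is the ratio
`P(hybrid i z) / ∑ₛ P(hybrid i s)` and `hybrid i s` agrees with `x` below `i`, equals `s`
at `i`, and agrees with `y` above `i`. -/
theorem stmt_2 (n : ℕ) (S : Fin n → Type) [∀ i, Fintype (S i)]
    [∀ i, DecidableEq (S i)]
    (P : (∀ i, S i) → ℝ) (hpos : ∀ z, 0 < P z) (hsum : ∑ z, P z = 1)
    (x y : ∀ i, S i)
    (hybrid : ∀ i : Fin n, S i → (∀ j, S j))
    (hhybrid : ∀ (i : Fin n) (s : S i) (j : Fin n),
      hybrid i s j = if h : (j : ℕ) < (i : ℕ) then x j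
        else if h' : j = i then h' ▸ s else y j)
    (cond : ∀ i : Fin n, S i → ℝ)
    (hcond : ∀ (i : Fin n) (z : S i),
      cond i z = P (hybrid i z) / ∑ s : S i, P (hybrid i s)) :
    P x / P y = ∏ i : Fin n, cond i (x i) / cond i (y i) := by
  classical
  set f : ℕ → (∀ j, S j) := fun k j => if (j : ℕ) < k then x j else y j with hf
  have hfx : f n = x := by
    funext j; simp [hf, j.isLt]
  have hfy : f 0 = y := by
    funext j; simp [hf]
  have key : ∀ i : Fin n, cond i (x i) / cond i (y i)
      = P (f ((i : ℕ) + 1)) / P (f (i : ℕ)) := by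
    intro i
    have h1 : hybrid i (x i) = f ((i : ℕ) + 1) := by
      funext j
      rw [hhybrid]
      by_cases h : (j : ℕ) < (i : ℕ)
      · simp [hf, h, Nat.lt_succ_of_lt h]
      · by_cases h' : j = i
        · subst h'; simp [hf, Nat.lt_succ_self]
        · have hne : (j : ℕ) ≠ (i : ℕ) := fun hh => h' (Fin.ext hh)
          have : ¬ (j : ℕ) < (i : ℕ) + 1 := by omega
          simp [hf, h, h', this]
    have h2 : hybrid i (y i) = f (i : ℕ) := by
      funext j
      rw [hhybrid]
      by_cases h : (j : ℕ) < (i : ℕ)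
      · simp [hf, h]
      · by_cases h' : j = i
        · subst h'; simp [hf]
        · simp [hf, h, h']
    have hT : (0 : ℝ) < ∑ s : S i, P (hybrid i s) :=
      Finset.sum_pos (fun s _ => hpos _) ⟨x i, Finset.mem_univ _⟩
    rw [hcond, hcond, h1, h2]
    have hb : P (f (i : ℕ)) ≠ 0 := (hpos _).ne'
    field_simp
  rw [Finset.prod_congr rfl (fun i _ => key i)]
  have tel : ∀ m : ℕ, ∏ i ∈ Finset.range m, P (f (i + 1)) / P (f i)
      = P (f m) / P (f 0) := by
    intro m
    induction m with
    | zero => simp [div_self (hpos _).ne']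
    | succ m ih =>
      rw [Finset.prod_range_succ, ih]
      have h0 : P (f 0) ≠ 0 := (hpos _).ne'
      have hm : P (f m) ≠ 0 := (hpos _).ne'
      field_simp
  have := tel n
  rw [Fin.prod_univ_eq_prod_range (fun i => P (f (i + 1)) / P (f i)) n, this, hfx, hfy]
end

section
/- With R, J_E, and the Bayes binomial ideal B_E as above, and β = ∏_{I∈E} (∑_{j∈I} p_{j|I}), the Bayes ideal is contained in the saturation of J_E by β: B_E ⊆ (J_E : β^∞). Concretely, for every Bayes binomial g = p_{i|K} p_{j|J} − p_{j|K} p_{i|J} with i,j ∈ J ⊆ K, one has (∑_{l∈J} p_{l|J}) · g ∈ J_E. -/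
open MvPolynomial

/-- Variables `p_{i|I}` for `i ∈ I ∈ E`: pairs `(I, i)` with `i ∈ I` and `I ∈ E`. -/
def CPVar (m : ℕ) (E : Finset (Finset (Fin m))) :=
  {x : Finset (Fin m) × Fin m // x.2 ∈ x.1 ∧ x.1 ∈ E}

/-- With `s = ∑ p_{l|J}`, `t = ∑ p_{l|K}`, `x = p_{·|K}`, `y = p_{·|J}`, the hypotheses are
generators of `J_E` and the conclusion is `s` times a Bayes binomial. -/
theorem mul_sub_mul_mem_of_mul_sub_mul_mem {R : Type*} [CommRing R] {I : Ideal R}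
    {s t xi xj yi yj : R} (hi : s * xi - yi * t ∈ I) (hj : s * xj - yj * t ∈ I) :
    s * (xi * yj - xj * yi) ∈ I := by
  have hsplit : s * (xi * yj - xj * yi) = yj * (s * xi - yi * t) - yi * (s * xj - yj * t) := by
    ring
  rw [hsplit]
  exact sub_mem (I.mul_mem_left _ hi) (I.mul_mem_left _ hj)

theorem mul_mem_of_mem_span_of_forall_dvd_mul_mem {R : Type*} [CommRing R] {I : Ideal R}
    {G : Set R} {b g : R} (hG : ∀ g ∈ G, ∃ s, s ∣ b ∧ s * g ∈ I) (hg : g ∈ Ideal.span G) :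
    b * g ∈ I := by
  have hle : Ideal.span G ≤ I.colon {b} := by
    refine Ideal.span_le.2 fun g hgG => ?_
    obtain ⟨s, ⟨c, rfl⟩, hsg⟩ := hG g hgG
    rw [SetLike.mem_coe, Submodule.mem_colon_singleton, smul_eq_mul, mul_comm, mul_right_comm]
    exact I.mul_mem_right c hsg
  rw [mul_comm, ← smul_eq_mul]
  exact Submodule.mem_colon_singleton.1 (hle hg)

theorem stmt_7_general (m : ℕ) (E : Finset (Finset (Fin m)))
    (JE BE : Ideal (MvPolynomial (CPVar m E) ℂ))
    (β : MvPolynomial (CPVar m E) ℂ)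
    (hβ : β = ∏ I ∈ E.attach,
      ∑ j ∈ (↑I : Finset (Fin m)).attach, X (⟨(↑I, ↑j), ⟨j.2, I.2⟩⟩ : CPVar m E))
    (hJE : JE = Ideal.span {f | ∃ (J K : Finset (Fin m)) (hJ : J ∈ E) (hK : K ∈ E)
      (hJK : J ⊆ K) (i : Fin m) (hi : i ∈ J),
      f = (∑ j ∈ J.attach, X (⟨(J, ↑j), ⟨j.2, hJ⟩⟩ : CPVar m E))
            * X ⟨(K, i), ⟨hJK hi, hK⟩⟩
          - X ⟨(J, i), ⟨hi, hJ⟩⟩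
            * ∑ j ∈ J.attach, X (⟨(K, ↑j), ⟨hJK j.2, hK⟩⟩ : CPVar m E)})
    (hBE : BE = Ideal.span {f | ∃ (J K : Finset (Fin m)) (hJ : J ∈ E) (hK : K ∈ E)
      (hJK : J ⊆ K) (i j : Fin m) (hi : i ∈ J) (hj : j ∈ J),
      f = X (⟨(K, i), ⟨hJK hi, hK⟩⟩ : CPVar m E) * X ⟨(J, j), ⟨hj, hJ⟩⟩
          - X ⟨(K, j), ⟨hJK hj, hK⟩⟩ * X ⟨(J, i), ⟨hi, hJ⟩⟩}) :
    (∀ g ∈ BE, ∃ n : ℕ, β ^ n * g ∈ JE) ∧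
    (∀ (J K : Finset (Fin m)) (hJ : J ∈ E) (hK : K ∈ E) (hJK : J ⊆ K)
      (i j : Fin m) (hi : i ∈ J) (hj : j ∈ J),
      (∑ l ∈ J.attach, X (⟨(J, ↑l), ⟨l.2, hJ⟩⟩ : CPVar m E)) *
        (X (⟨(K, i), ⟨hJK hi, hK⟩⟩ : CPVar m E) * X ⟨(J, j), ⟨hj, hJ⟩⟩
          - X ⟨(K, j), ⟨hJK hj, hK⟩⟩ * X ⟨(J, i), ⟨hi, hJ⟩⟩) ∈ JE) := by
  have hbayes : ∀ (J K : Finset (Fin m)) (hJ : J ∈ E) (hK : K ∈ E) (hJK : J ⊆ K)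
      (i j : Fin m) (hi : i ∈ J) (hj : j ∈ J),
      (∑ l ∈ J.attach, X (⟨(J, ↑l), ⟨l.2, hJ⟩⟩ : CPVar m E)) *
        (X (⟨(K, i), ⟨hJK hi, hK⟩⟩ : CPVar m E) * X ⟨(J, j), ⟨hj, hJ⟩⟩
          - X ⟨(K, j), ⟨hJK hj, hK⟩⟩ * X ⟨(J, i), ⟨hi, hJ⟩⟩) ∈ JE := by
    intro J K hJ hK hJK i j hi hj
    subst hJE
    exact mul_sub_mul_mem_of_mul_sub_mul_mem
      (Ideal.subset_span ⟨J, K, hJ, hK, hJK, i, hi, rfl⟩)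
      (Ideal.subset_span ⟨J, K, hJ, hK, hJK, j, hj, rfl⟩)
  refine ⟨fun g hg => ⟨1, ?_⟩, hbayes⟩
  rw [pow_one]
  subst hBE hβ
  refine mul_mem_of_mem_span_of_forall_dvd_mul_mem ?_ hg
  rintro _ ⟨J, K, hJ, hK, hJK, i, j, hi, hj, rfl⟩
  exact ⟨_, Finset.dvd_prod_of_mem _ (Finset.mem_attach _ ⟨J, hJ⟩),
    hbayes J K hJ hK hJK i j hi hj⟩

/-- The Bayes binomial ideal `B_E` is contained in the saturation `(J_E : β^∞)`, where
`β = ∏_{I∈E} ∑_{j∈I} p_{j|I}`; concretely, `(∑_{l∈J} p_{l|J}) · g ∈ J_E` for each Bayes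
binomial `g = p_{i|K} p_{j|J} − p_{j|K} p_{i|J}`. -/
theorem stmt_7 (m : ℕ) (E : Finset (Finset (Fin m))) (hE : ∀ I ∈ E, 2 ≤ I.card)
    (JE BE : Ideal (MvPolynomial (CPVar m E) ℂ))
    (β : MvPolynomial (CPVar m E) ℂ)
    (hβ : β = ∏ I ∈ E.attach,
      ∑ j ∈ (↑I : Finset (Fin m)).attach, X (⟨(↑I, ↑j), ⟨j.2, I.2⟩⟩ : CPVar m E))
    (hJE : JE = Ideal.span {f | ∃ (J K : Finset (Fin m)) (hJ : J ∈ E) (hK : K ∈ E)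
      (hJK : J ⊆ K) (i : Fin m) (hi : i ∈ J),
      f = (∑ j ∈ J.attach, X (⟨(J, ↑j), ⟨j.2, hJ⟩⟩ : CPVar m E))
            * X ⟨(K, i), ⟨hJK hi, hK⟩⟩
          - X ⟨(J, i), ⟨hi, hJ⟩⟩
            * ∑ j ∈ J.attach, X (⟨(K, ↑j), ⟨hJK j.2, hK⟩⟩ : CPVar m E)})
    (hBE : BE = Ideal.span {f | ∃ (J K : Finset (Fin m)) (hJ : J ∈ E) (hK : K ∈ E)
      (hJK : J ⊆ K) (i j : Fin m) (hi : i ∈ J) (hj : j ∈ J),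
      f = X (⟨(K, i), ⟨hJK hi, hK⟩⟩ : CPVar m E) * X ⟨(J, j), ⟨hj, hJ⟩⟩
          - X ⟨(K, j), ⟨hJK hj, hK⟩⟩ * X ⟨(J, i), ⟨hi, hJ⟩⟩}) :
    (∀ g ∈ BE, ∃ n : ℕ, β ^ n * g ∈ JE) ∧
    (∀ (J K : Finset (Fin m)) (hJ : J ∈ E) (hK : K ∈ E) (hJK : J ⊆ K)
      (i j : Fin m) (hi : i ∈ J) (hj : j ∈ J),
      (∑ l ∈ J.attach, X (⟨(J, ↑l), ⟨l.2, hJ⟩⟩ : CPVar m E)) *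
        (X (⟨(K, i), ⟨hJK hi, hK⟩⟩ : CPVar m E) * X ⟨(J, j), ⟨hj, hJ⟩⟩
          - X ⟨(K, j), ⟨hJK hj, hK⟩⟩ * X ⟨(J, i), ⟨hi, hJ⟩⟩) ∈ JE) :=
  stmt_7_general m E JE BE β hβ hJE hBE
end

section
/- Let E be a collection of subsets of [m] = {1,...,m} of size ≥ 2 with [m] ∈ E, and let B_E ⊆ R = ℂ[p_{i|I}] be the Bayes binomial ideal. Write p_i for p_{i|[m]}. For any cycle i_1, J_1, i_2, ..., i_k, J_k, i_1 in the bipartite graph G(E) (with i_r, i_{r+1} ∈ J_r ∈ E), the cycle binomial f = ∏_r p_{i_{r+1}|J_r} − ∏_r p_{i_r|J_r} satisfies (∏_{r=1}^k p_{i_r}) · f ∈ B_E. -/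
open MvPolynomial

/-- For any cycle `i₁, J₁, i₂, …, i_k, J_k, i₁` in the bipartite graph `G(E)` (with
`[m] ∈ E`, `p_i := p_{i|[m]}`), the cycle binomial
`f = ∏_r p_{i_{r+1}|J_r} − ∏_r p_{i_r|J_r}` satisfies `(∏_r p_{i_r}) · f ∈ B_E`. -/
theorem stmt_8 (m : ℕ) (E : Finset (Finset (Fin m))) (hE : ∀ I ∈ E, 2 ≤ I.card)
    (hUniv : (Finset.univ : Finset (Fin m)) ∈ E)
    (BE : Ideal (MvPolynomial (CPVar m E) ℂ))
    (hBE : BE = Ideal.span {f | ∃ (J K : Finset (Fin m)) (hJ : J ∈ E) (hK : K ∈ E)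
      (hJK : J ⊆ K) (i j : Fin m) (hi : i ∈ J) (hj : j ∈ J),
      f = X (⟨(K, i), ⟨hJK hi, hK⟩⟩ : CPVar m E) * X ⟨(J, j), ⟨hj, hJ⟩⟩
          - X ⟨(K, j), ⟨hJK hj, hK⟩⟩ * X ⟨(J, i), ⟨hi, hJ⟩⟩})
    (k : ℕ) [NeZero k]
    (i : ZMod k → Fin m) (J : ZMod k → Finset (Fin m))
    (hJE : ∀ r, J r ∈ E)
    (h₁ : ∀ r, i r ∈ J r) (h₂ : ∀ r, i (r + 1) ∈ J r) :
    (∏ r : ZMod k,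
        X (⟨(Finset.univ, i r), ⟨Finset.mem_univ _, hUniv⟩⟩ : CPVar m E)) *
      (∏ r : ZMod k, X (⟨(J r, i (r + 1)), ⟨h₂ r, hJE r⟩⟩ : CPVar m E)
        - ∏ r : ZMod k, X (⟨(J r, i r), ⟨h₁ r, hJE r⟩⟩ : CPVar m E)) ∈ BE := by
  rw [← Ideal.Quotient.eq_zero_iff_mem]
  set φ := Ideal.Quotient.mk BE with hφ
  -- abbreviations for the four families of variables
  set A : ZMod k → MvPolynomial (CPVar m E) ℂ :=
    fun r => X (⟨(Finset.univ, i r), ⟨Finset.mem_univ _, hUniv⟩⟩ : CPVar m E) with hA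
  set B : ZMod k → MvPolynomial (CPVar m E) ℂ :=
    fun r => X (⟨(J r, i (r + 1)), ⟨h₂ r, hJE r⟩⟩ : CPVar m E) with hB
  set D : ZMod k → MvPolynomial (CPVar m E) ℂ :=
    fun r => X (⟨(J r, i r), ⟨h₁ r, hJE r⟩⟩ : CPVar m E) with hD
  have hg : ∀ r : ZMod k, φ (A r * B r) = φ (A (r + 1) * D r) := by
    intro r
    rw [Ideal.Quotient.eq, hBE]
    apply Ideal.subset_span
    exact ⟨J r, Finset.univ, hJE r, hUniv, Finset.subset_univ _, i r, i (r + 1),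
      h₁ r, h₂ r, rfl⟩
  have hshift : (∏ r : ZMod k, φ (A (r + 1))) = ∏ r : ZMod k, φ (A r) :=
    Fintype.prod_equiv (Equiv.addRight (1 : ZMod k)) _ _ (fun r => rfl)
  have key : φ ((∏ r : ZMod k, A r) * (∏ r : ZMod k, B r - ∏ r : ZMod k, D r)) = 0 := by
    simp only [map_mul, map_sub, map_prod]
    rw [mul_sub, sub_eq_zero, ← Finset.prod_mul_distrib]
    calc ∏ r : ZMod k, φ (A r) * φ (B r)
        = ∏ r : ZMod k, φ (A (r + 1)) * φ (D r) := by
          refine Finset.prod_congr rfl fun r _ => ?_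
          rw [← map_mul, ← map_mul, hg r]
      _ = (∏ r : ZMod k, φ (A (r + 1))) * ∏ r : ZMod k, φ (D r) :=
          Finset.prod_mul_distrib
      _ = (∏ r : ZMod k, φ (A r)) * ∏ r : ZMod k, φ (D r) := by rw [hshift]
  exact key
end

section
/- Let p* be the minimizer of D(p) = ∑_{i∈I∈E} p_{i|I} log(|I| p_{i|I}) over the polytope P = {p ∈ ∏_{I∈E} Δ_I : A p = b}, where A is an integer matrix whose row span contains, for each I ∈ E, the indicator vector of the coordinates {(i|I) : i ∈ I}. If p* lies in the interior of ∏_{I∈E} Δ_I (all coordinates strictly between 0 and 1), then for every u ∈ ker A ∩ ℤ^{‖E‖}, the binomial relation ∏ (p*_{i|I})^{u⁺_{i|I}} = ∏ (p*_{i|I})^{u⁻_{i|I}} holds. -/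
instance (m : ℕ) (E : Finset (Finset (Fin m))) : Fintype (CPVar m E) :=
  Subtype.fintype _

open Finset Filter Topology Matrix

section
variable {ι : Type*} [Fintype ι]

theorem sum_filter_eq_zero_of_vecMul_eq_indicator {κ : Type*} [Fintype κ] {A : Matrix κ ι ℝ}
    {f : ι → ℝ} (hf : ∀ r, ∑ v, A r v * f v = 0) {q : ι → Prop} [DecidablePred q] {c : κ → ℝ}
    (hc : ∀ v, ∑ r, c r * A r v = if q v then 1 else 0) :
    ∑ v with q v, f v = 0 := by
  have h : (c ᵥ* A) ⬝ᵥ f = 0 := by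
    rw [← dotProduct_mulVec, show A *ᵥ f = 0 from funext hf, dotProduct_zero]
  simpa [dotProduct, vecMul, hc, sum_filter] using h

theorem eventually_forall_pos_add_smul {p : ι → ℝ} (hp : ∀ v, 0 < p v) (f : ι → ℝ) :
    ∀ᶠ t in 𝓝 (0 : ℝ), ∀ v, 0 < (p + t • f) v := by
  refine eventually_all.2 fun v => ?_
  have : Tendsto (fun t : ℝ => p v + t * f v) (𝓝 0) (𝓝 (p v)) :=
    (by fun_prop : Continuous fun t : ℝ => p v + t * f v).tendsto' 0 (p v) (by simp)
  simpa using this.eventually (lt_mem_nhds (hp v))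

theorem hasDerivAt_mul_log_const_mul {c x : ℝ} (hcx : c * x ≠ 0) :
    HasDerivAt (fun y => y * Real.log (c * y)) (Real.log (c * x) + 1) x := by
  have hc : c ≠ 0 := left_ne_zero_of_mul hcx
  have hx : x ≠ 0 := right_ne_zero_of_mul hcx
  refine ((hasDerivAt_id' x).fun_mul
    ((Real.hasDerivAt_log hcx).comp x ((hasDerivAt_id' x).const_mul c))).congr_deriv ?_
  rw [Function.comp_apply]
  field_simp

theorem hasDerivAt_sum_mul_log_add_smul {w p : ι → ℝ} (h : ∀ v, w v * p v ≠ 0) (f : ι → ℝ) :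
    HasDerivAt (fun t : ℝ => ∑ v, (p + t • f) v * Real.log (w v * (p + t • f) v))
      (∑ v, f v * (Real.log (w v * p v) + 1)) 0 := by
  refine HasDerivAt.fun_sum fun v _ => ?_
  have hline : HasDerivAt (fun t : ℝ => (p + t • f) v) (f v) 0 := by
    simpa using ((hasDerivAt_id (0 : ℝ)).mul_const (f v)).const_add (p v)
  rw [mul_comm]
  exact (hasDerivAt_mul_log_const_mul (h v)).comp_of_eq 0 hline (by simp)

theorem prod_pow_toNat_eq_prod_pow_neg_toNat {p : ι → ℝ} (hp : ∀ v, 0 < p v) {u : ι → ℤ}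
    (h : ∑ v, (u v : ℝ) * Real.log (p v) = 0) :
    ∏ v, p v ^ (u v).toNat = ∏ v, p v ^ (-u v).toNat := by
  have hlog (n : ι → ℕ) : Real.log (∏ v, p v ^ n v) = ∑ v, (n v : ℝ) * Real.log (p v) := by
    rw [Real.log_prod fun v _ => pow_ne_zero _ (hp v).ne']
    simp_rw [Real.log_pow]
  refine Real.log_injOn_pos (prod_pos fun v _ => pow_pos (hp v) _)
    (prod_pos fun v _ => pow_pos (hp v) _) ?_
  rw [hlog, hlog, ← sub_eq_zero, ← sum_sub_distrib, ← h]
  refine sum_congr rfl fun v _ => ?_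
  rw [← sub_mul]
  congr 1
  exact_mod_cast (u v).toNat_sub_toNat_neg

end

namespace CPVar
variable {m : ℕ} {E : Finset (Finset (Fin m))}

theorem card_pos (v : CPVar m E) : 0 < v.1.1.card :=
  Finset.card_pos.2 ⟨v.1.2, v.2.1⟩

theorem sum_attach_eq_sum_filter {I : Finset (Fin m)} (hI : I ∈ E) (q : CPVar m E → ℝ) :
    ∑ i ∈ I.attach, q ⟨(I, ↑i), ⟨i.2, hI⟩⟩ = ∑ v with v.1.1 = I, q v := by
  refine sum_bij' (fun i _ => ⟨(I, ↑i), ⟨i.2, hI⟩⟩)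
    (fun v hv => ⟨v.1.2, (mem_filter.1 hv).2 ▸ v.2.1⟩)
    (fun _ _ => mem_filter.2 ⟨mem_univ _, rfl⟩) (by simp) (by simp)
    (fun v hv => Subtype.ext (Prod.ext (mem_filter.1 hv).2.symm rfl)) (by simp)

theorem sum_mul_eq_zero_of_sum_filter_eq_zero {f : CPVar m E → ℝ}
    (hf : ∀ I ∈ E, ∑ v with v.1.1 = I, f v = 0) (w : Finset (Fin m) → ℝ) :
    ∑ v, f v * w v.1.1 = 0 := by
  rw [← sum_fiberwise_of_maps_to (g := fun v : CPVar m E => v.1.1) (t := E) fun v _ => v.2.2]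
  refine sum_eq_zero fun I hI => ?_
  rw [sum_congr rfl fun v hv => by rw [(mem_filter.1 hv).2], ← sum_mul, hf I hI, zero_mul]

theorem sum_mul_log_eq_zero_of_sum_mul_log_card_mul {f p : CPVar m E → ℝ}
    (hf : ∀ I ∈ E, ∑ v with v.1.1 = I, f v = 0) (hp : ∀ v, 0 < p v)
    (hcrit : ∑ v, f v * (Real.log (v.1.1.card * p v) + 1) = 0) :
    ∑ v, f v * Real.log (p v) = 0 :=
  calc ∑ v, f v * Real.log (p v)
      = ∑ v, f v * (Real.log (v.1.1.card * p v) + 1)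
        - ∑ v, f v * (Real.log v.1.1.card + 1) := by
        rw [← sum_sub_distrib]
        refine sum_congr rfl fun v _ => ?_
        rw [Real.log_mul (Nat.cast_pos.2 v.card_pos).ne' (hp v).ne']
        ring
    _ = 0 := by
      rw [hcrit, sum_mul_eq_zero_of_sum_filter_eq_zero hf fun I => Real.log I.card + 1,
        sub_zero]

end CPVar

/-- If the minimizer `p*` of `D(p) = ∑ p_{i|I} log(|I| p_{i|I})` over
`P = {p ∈ ∏_{I∈E} Δ_I : A p = b}` (with the row span of `A` containing the indicator of
the coordinates of each `I ∈ E`) has all coordinates strictly between `0` and `1`, then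
`p*` satisfies the binomial relations `∏ (p*)^{u⁺} = ∏ (p*)^{u⁻}` for all integer kernel
vectors `u` of `A`. -/
theorem stmt_13 (m : ℕ) (E : Finset (Finset (Fin m)))
    (d : ℕ) (A : Matrix (Fin d) (CPVar m E) ℤ) (b : Fin d → ℝ)
    (hrow : ∀ I ∈ E, ∃ c : Fin d → ℝ, ∀ v : CPVar m E,
      ∑ r, c r * (A r v : ℝ) = if v.1.1 = I then 1 else 0)
    (D : (CPVar m E → ℝ) → ℝ)
    (hD : ∀ q, D q = ∑ v : CPVar m E,
      q v * Real.log ((v.1.1.card : ℝ) * q v))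
    (P : Set (CPVar m E → ℝ))
    (hP : P = {p | (∀ v, 0 ≤ p v) ∧
      (∀ I (hI : I ∈ E), ∑ i ∈ I.attach, p ⟨(I, ↑i), ⟨i.2, hI⟩⟩ = 1) ∧
      (∀ r, ∑ v, (A r v : ℝ) * p v = b r)})
    (pstar : CPVar m E → ℝ)
    (hmin : pstar ∈ P ∧ ∀ q ∈ P, D pstar ≤ D q)
    (hint : ∀ v, 0 < pstar v ∧ pstar v < 1) :
    ∀ u : CPVar m E → ℤ, (∀ r, ∑ v, A r v * u v = 0) →
      ∏ v, pstar v ^ (u v).toNat = ∏ v, pstar v ^ (-(u v)).toNat := by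
  intro u hu
  obtain ⟨hpP, hpmin⟩ := hmin
  have hpos (v : CPVar m E) : 0 < pstar v := (hint v).1
  set f : CPVar m E → ℝ := fun v => (u v : ℝ) with hf
  have hker (r : Fin d) : ∑ v, (A r v : ℝ) * f v = 0 := by
    simp only [hf]
    exact_mod_cast hu r
  have hblock : ∀ I ∈ E, ∑ v with v.1.1 = I, f v = 0 := fun I hI =>
    let ⟨_, hc⟩ := hrow I hI
    sum_filter_eq_zero_of_vecMul_eq_indicator hker hc
  have hline : ∀ᶠ t in 𝓝 (0 : ℝ), pstar + t • f ∈ P := by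
    rw [hP] at hpP ⊢
    filter_upwards [eventually_forall_pos_add_smul hpos f] with t ht
    refine ⟨fun v => (ht v).le, fun I hI => ?_, fun r => ?_⟩
    · have h1 := hpP.2.1 I hI
      rw [CPVar.sum_attach_eq_sum_filter hI] at h1 ⊢
      simp only [Pi.add_apply, Pi.smul_apply, smul_eq_mul, sum_add_distrib, ← mul_sum,
        hblock I hI, h1, mul_zero, add_zero]
    · simp only [Pi.add_apply, Pi.smul_apply, smul_eq_mul, mul_add, sum_add_distrib,
        mul_left_comm _ t, ← mul_sum, hker r, hpP.2.2 r, mul_zero, add_zero]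
  have hcrit : ∑ v, f v * (Real.log (v.1.1.card * pstar v) + 1) = 0 := by
    have hderiv := hasDerivAt_sum_mul_log_add_smul (w := fun v => (v.1.1.card : ℝ))
      (fun v => (mul_pos (Nat.cast_pos.2 v.card_pos) (hpos v)).ne') f
    rw [← funext fun t => hD (pstar + t • f)] at hderiv
    refine IsLocalMin.hasDerivAt_eq_zero ?_ hderiv
    filter_upwards [hline] with t ht
    simpa using hpmin _ ht
  exact prod_pow_toNat_eq_prod_pow_neg_toNat hpos
    (CPVar.sum_mul_log_eq_zero_of_sum_mul_log_card_mul hblock hpos hcrit)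
end

section
/- Let E be a finite collection of nonempty subsets of [m] and w_E(J) = #{I ∈ E : I ∩ J ≠ ∅}. Then the Minkowski sum ∑_{I∈E} Δ_I of the simplices Δ_I = conv{e_k : k ∈ I} equals the polytope Q = {x ∈ ℝ^m : ∑_i x_i = w_E([m]), and ∑_{i∈J} x_i ≤ w_E(J) for all nonempty J ⊆ [m]}. -/
/-!
Every simplex `Δ_I` satisfies the constraints of `Q` for the weight `J ↦ [I ∩ J ≠ ∅]`, and these
weights add up to `w_E`, so the Minkowski sum lies in `Q`. Conversely, the Minkowski sum is
compact and convex, so by Hahn–Banach it suffices to bound every linear functional `c` on `Q` by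
its maximum on the sum, `∑_{I ∈ E} max_{i ∈ I} c_i`, attained at a sum of vertices. For this write
`c` as a layer cake `c = v₀ + ∑_k d_k 1_{T_k}` with `d_k ≥ 0` and upper level sets
`T_k = {c > v_k}`. On `x ∈ Q` this gives `⟪c, x⟫ ≤ v₀ w_E([m]) + ∑_k d_k w_E(T_k)`, and the
right-hand side is `∑_I max_I c` because `max_I c > v_k` exactly when `I` meets `T_k`.
-/

open Pointwise Finset

theorem Monotone.eq_add_sum_ite_lt {v : ℕ → ℝ} (hv : Monotone v) {j N : ℕ} (hj : j ≤ N) :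
    v j = v 0 + ∑ k ∈ range N, if v k < v j then v (k + 1) - v k else 0 := by
  rw [← sub_eq_iff_eq_add', ← sum_range_sub v j]
  refine sum_subset_zero_on_sdiff (range_subset_range.2 hj) (fun k hk => ?_) (fun k hk => ?_)
  · simp only [mem_sdiff, mem_range, not_lt] at hk
    exact if_neg (hv hk.2).not_gt
  · rw [mem_range] at hk
    split_ifs with hlt
    · rfl
    · -- `v k = v j`, so the gap at `k` is squeezed to zero
      have hjk : v j ≤ v k := not_lt.1 hlt
      linarith [hv k.le_succ, hv (Nat.succ_le_of_lt hk)]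

theorem Finset.exists_monotone_subset_image_Iic (S : Finset ℝ) :
    ∃ (v : ℕ → ℝ) (N : ℕ), Monotone v ∧ (S : Set ℝ) ⊆ v '' Set.Iic N := by
  induction S using Finset.induction_on_max with
  | empty => exact ⟨0, 0, monotone_const, by simp⟩
  | insert a S hlt ih =>
    obtain ⟨v, N, hv, hS⟩ := ih
    refine ⟨fun k => if k ≤ N then min (v k) a else a, N + 1, fun k l hkl => ?_, ?_⟩
    · dsimp only
      split_ifs with hk hl hl
      · exact min_le_min_right a (hv hkl)
      · exact min_le_right _ _
      · omega
      · rfl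
    · rw [coe_insert, Set.insert_subset_iff]
      refine ⟨⟨N + 1, Set.mem_Iic.2 le_rfl, by simp⟩, fun r hr => ?_⟩
      obtain ⟨j, hj, rfl⟩ := hS hr
      exact ⟨j, Set.mem_Iic.2 (hj.trans N.le_succ), by simp [Set.mem_Iic.1 hj, (hlt _ hr).le]⟩

theorem Convex.mem_of_forall_exists_le_apply {E : Type*} [TopologicalSpace E] [AddCommGroup E]
    [IsTopologicalAddGroup E] [Module ℝ E] [ContinuousSMul ℝ E] [LocallyConvexSpace ℝ E]
    {s : Set E} (hs : Convex ℝ s) (hsc : IsClosed s) {x : E}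
    (h : ∀ f : StrongDual ℝ E, ∃ y ∈ s, f x ≤ f y) : x ∈ s := by
  by_contra hx
  obtain ⟨f, u, hfs, hfx⟩ := geometric_hahn_banach_closed_point hs hsc hx
  obtain ⟨y, hy, hxy⟩ := h f
  exact (hfs y hy).not_ge (hfx.le.trans hxy)

theorem ContinuousLinearMap.apply_eq_sum_mul_apply_single {ι : Type*} [Fintype ι] [DecidableEq ι]
    (f : (ι → ℝ) →L[ℝ] ℝ) (x : ι → ℝ) : f x = ∑ i, f (Pi.single i 1) * x i := by
  conv_lhs => rw [← univ_sum_single x]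
  simp only [map_sum]
  refine sum_congr rfl fun i _ => ?_
  rw [mul_comm, ← smul_eq_mul, ← map_smul, ← Pi.single_smul, smul_eq_mul, mul_one]

variable {ι : Type*}

section Fintype

variable [Fintype ι]

def basePolytope (w : Finset ι → ℝ) : Set (ι → ℝ) :=
  {x | ∑ i, x i = w univ ∧ ∀ J : Finset ι, J.Nonempty → ∑ i ∈ J, x i ≤ w J}

theorem convex_basePolytope (w : Finset ι → ℝ) : Convex ℝ (basePolytope w) := by
  rintro x ⟨hx, hxJ⟩ y ⟨hy, hyJ⟩ a b ha hb hab
  have hsum : ∀ J : Finset ι, ∑ i ∈ J, (a • x + b • y) i = a * ∑ i ∈ J, x i + b * ∑ i ∈ J, y i :=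
    fun J => by simp only [Pi.add_apply, Pi.smul_apply, smul_eq_mul, sum_add_distrib, mul_sum]
  refine ⟨by rw [hsum, hx, hy, ← add_mul, hab, one_mul], fun J hJ => ?_⟩
  calc ∑ i ∈ J, (a • x + b • y) i = a * ∑ i ∈ J, x i + b * ∑ i ∈ J, y i := hsum J
    _ ≤ a * w J + b * w J := by gcongr <;> [exact hxJ J hJ; exact hyJ J hJ]
    _ = w J := by rw [← add_mul, hab, one_mul]

theorem sum_mem_basePolytope {α : Type*} {s : Finset α} {w : α → Finset ι → ℝ} {y : α → ι → ℝ}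
    (hy : ∀ a ∈ s, y a ∈ basePolytope (w a)) : ∑ a ∈ s, y a ∈ basePolytope (∑ a ∈ s, w a) := by
  refine ⟨?_, fun J hJ => ?_⟩
  · simp only [Finset.sum_apply]
    rw [sum_comm]
    exact sum_congr rfl fun a ha => (hy a ha).1
  · simp only [Finset.sum_apply]
    rw [sum_comm]
    exact sum_le_sum fun a ha => (hy a ha).2 J hJ

end Fintype

variable [DecidableEq ι]

def coordSimplex (I : Finset ι) : Set (ι → ℝ) :=
  convexHull ℝ ((fun i => Pi.single i 1) '' I)

def hitCount (E : Finset (Finset ι)) (J : Finset ι) : ℝ :=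
  ∑ I ∈ E, if (I ∩ J).Nonempty then 1 else 0

theorem isCompact_coordSimplex (I : Finset ι) : IsCompact (coordSimplex I) :=
  (I.finite_toSet.image _).isCompact_convexHull ℝ

theorem exists_mem_coordSimplex_isGreatest (f : (ι → ℝ) →L[ℝ] ℝ) {I : Finset ι}
    (hI : I.Nonempty) :
    ∃ y ∈ coordSimplex I, IsGreatest ((fun i => f (Pi.single i 1)) '' I) (f y) := by
  obtain ⟨k, hk, hmax⟩ := I.exists_max_image (fun i => f (Pi.single i 1)) hI
  exact ⟨Pi.single k 1, subset_convexHull ℝ _ ⟨k, hk, rfl⟩, ⟨k, hk, rfl⟩,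
    by rintro _ ⟨i, hi, rfl⟩; exact hmax i hi⟩

variable [Fintype ι]

theorem coordSimplex_subset_basePolytope {I : Finset ι} (hI : I.Nonempty) :
    coordSimplex I ⊆ basePolytope fun J => if (I ∩ J).Nonempty then 1 else 0 := by
  refine convexHull_min ?_ (convex_basePolytope _)
  rintro _ ⟨k, hk, rfl⟩
  refine ⟨by simp [sum_pi_single', hI], fun J _ => ?_⟩
  rw [sum_pi_single']
  by_cases hkJ : k ∈ J
  · simp [hkJ, show (I ∩ J).Nonempty from ⟨k, mem_inter.2 ⟨hk, hkJ⟩⟩]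
  · simp only [hkJ, if_false]
    split_ifs <;> norm_num

theorem sum_coordSimplex_subset_basePolytope {E : Finset (Finset ι)} (hE : ∀ I ∈ E, I.Nonempty) :
    ∑ I ∈ E, coordSimplex I ⊆ basePolytope (hitCount E) := by
  intro x hx
  obtain ⟨y, hy, rfl⟩ := (Set.mem_finsetSum _ _ _).1 hx
  have hw : hitCount E = ∑ I ∈ E, fun J => if (I ∩ J).Nonempty then (1 : ℝ) else 0 := by
    ext J
    simp [hitCount, Finset.sum_apply]
  rw [hw]
  exact sum_mem_basePolytope fun I hI => coordSimplex_subset_basePolytope (hE I hI) (hy hI)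

theorem sum_mul_le_of_mem_basePolytope {E : Finset (Finset ι)} {x : ι → ℝ}
    (hx : x ∈ basePolytope (hitCount E)) {c : ι → ℝ} {M : Finset ι → ℝ}
    (hM : ∀ I ∈ E, IsGreatest (c '' I) (M I)) :
    ∑ i, c i * x i ≤ ∑ I ∈ E, M I := by
  obtain ⟨v, N, hv, hvc⟩ := (univ.image c).exists_monotone_subset_image_Iic
  set d : ℕ → ℝ := fun k => v (k + 1) - v k
  set T : ℕ → Finset ι := fun k => univ.filter (v k < c ·)
  have layer : ∀ r ∈ univ.image c, r = v 0 + ∑ k ∈ range N, if v k < r then d k else 0 := by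
    intro r hr
    obtain ⟨j, hj, rfl⟩ := hvc hr
    exact hv.eq_add_sum_ite_lt hj
  have hc : ∀ i, c i = v 0 + ∑ k ∈ range N, if i ∈ T k then d k else 0 := by
    intro i
    simpa [T] using layer (c i) (mem_image_of_mem c (mem_univ i))
  have hMI : ∀ I ∈ E, M I = v 0 + ∑ k ∈ range N, if (I ∩ T k).Nonempty then d k else 0 := by
    intro I hI
    obtain ⟨⟨i, hi, hiM⟩, hle⟩ := hM I hI
    have hlt : ∀ k, v k < M I ↔ (I ∩ T k).Nonempty := by
      intro k
      simp only [Finset.Nonempty, mem_inter, T, mem_filter, mem_univ, true_and]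
      exact ⟨fun h => ⟨i, hi, hiM ▸ h⟩, fun ⟨j, hj, hvj⟩ => hvj.trans_le (hle ⟨j, hj, rfl⟩)⟩
    simpa only [hlt] using layer (M I) (hiM ▸ mem_image_of_mem c (mem_univ i))
  have hJ : ∀ J, ∑ i ∈ J, x i ≤ hitCount E J := by
    intro J
    rcases J.eq_empty_or_nonempty with rfl | hJ
    · simp only [sum_empty, hitCount]
      exact sum_nonneg fun I _ => by split_ifs <;> norm_num
    · exact hx.2 J hJ
  calc ∑ i, c i * x i = v 0 * ∑ i, x i + ∑ k ∈ range N, d k * ∑ i ∈ T k, x i := by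
        simp only [hc, add_mul, sum_add_distrib, sum_mul, mul_sum, ite_mul, zero_mul]
        rw [sum_comm (s := univ)]
        simp only [sum_ite_mem, univ_inter]
    _ ≤ v 0 * hitCount E univ + ∑ k ∈ range N, d k * hitCount E (T k) := by
        rw [hx.1]
        gcongr with k
        · exact sub_nonneg.2 (hv k.le_succ)
        · exact hJ _
    _ = ∑ I ∈ E, (v 0 + ∑ k ∈ range N, if (I ∩ T k).Nonempty then d k else 0) := by
        simp only [hitCount, inter_univ, mul_sum, mul_ite, mul_one, mul_zero, sum_add_distrib]
        rw [sum_comm (s := range N)]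
        congr 1
        exact sum_congr rfl fun I hI => if_pos (hM I hI).nonempty.of_image
    _ = ∑ I ∈ E, M I := sum_congr rfl fun I hI => (hMI I hI).symm

/-- The Minkowski sum of the simplices `Δ_I = conv{e_k : k ∈ I}` for `I ∈ E` equals the
polytope `{x : ∑ x_i = w_E([m]), ∑_{i∈J} x_i ≤ w_E(J) for all nonempty J}`, where
`w_E(J) = #{I ∈ E : I ∩ J ≠ ∅}`. -/
theorem stmt_17 (m : ℕ) (E : Finset (Finset (Fin m)))
    (hE : ∀ I ∈ E, I.Nonempty)
    (w : Finset (Fin m) → ℕ)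
    (hw : ∀ J, w J = (E.filter (fun I => (I ∩ J).Nonempty)).card) :
    ∑ I ∈ E, convexHull ℝ ((fun i => Pi.single i (1 : ℝ)) '' (I : Set (Fin m)))
      = {x : Fin m → ℝ | ∑ i, x i = (w Finset.univ : ℝ) ∧
          ∀ J : Finset (Fin m), J.Nonempty → ∑ i ∈ J, x i ≤ (w J : ℝ)} := by
  have hwE : (fun J => (w J : ℝ)) = hitCount E := funext fun J => by
    rw [hw, natCast_card_filter, hitCount]
  change ∑ I ∈ E, coordSimplex I = basePolytope (fun J => (w J : ℝ))
  rw [hwE]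
  refine (sum_coordSimplex_subset_basePolytope hE).antisymm fun x hx => ?_
  have hconvex : Convex ℝ (∑ I ∈ E, coordSimplex I) :=
    convex_sum _ fun I _ => convex_convexHull ℝ _
  have hcompact : IsCompact (∑ I ∈ E, coordSimplex I) :=
    sum_induction _ IsCompact (fun _ _ => IsCompact.add) isCompact_singleton
      fun I _ => isCompact_coordSimplex I
  refine hconvex.mem_of_forall_exists_le_apply hcompact.isClosed fun f => ?_
  choose! y hy hmax using fun I hI => exists_mem_coordSimplex_isGreatest f (hE I hI)
  refine ⟨∑ I ∈ E, y I, Set.finsetSum_mem_finsetSum _ _ _ hy, ?_⟩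
  rw [f.apply_eq_sum_mul_apply_single, map_sum]
  exact sum_mul_le_of_mem_basePolytope hx hmax
end

section
/- Let p be a strictly positive probability distribution on [m] with m ≥ 2 and set p_{i|ij} = p_i/(p_i + p_j) for i ≠ j. Then the point W(p) ∈ ℝ^m with coordinates W_i(p) = ∑_{j ≠ i} p_{i|ij} lies in the permutohedron P_{m−1} = conv{(σ(1)−1,...,σ(m)−1) : σ ∈ S_m}, and ∑_i W_i(p) = m(m−1)/2. -/
/-!
Think of `p` as Bradley–Terry strengths, so that `W_i(p)` is the expected score of player `i`
in a round robin. Writing `W_s` for the same vector computed among the players of a finset `s`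
(and `0` outside `s`),
`W_s = ∑_{a ∈ s} (p_a / ∑_s p) • ((|s| - 1) e_a + W_{s ∖ a})`,
because coordinatewise this reduces to `p_a · p_i/(p_i+p_a) = p_i · (1 - p_i/(p_i+p_a))`.
A point that gives the top score `|s| - 1` to one player and a vertex of the permutohedron of
`s ∖ a` to the others is a vertex of the permutohedron of `s`, so induction on `s` puts `W_s`
in the permutohedron. The coordinate sum is `|s|(|s|-1)/2` since `p_{i|ij} + p_{j|ij} = 1`.
-/

open Finset

theorem div_add_div_add_comm_eq_one {α : Type*} [DivisionSemiring α] {a b : α} (h : a + b ≠ 0) :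
    a / (a + b) + b / (b + a) = 1 := by
  rw [add_comm b, ← add_div, div_self h]

variable {ι : Type*}

def permutohedronVertices (s : Finset ι) : Set (ι → ℝ) :=
  {x | ∃ f : ι → ℕ, Set.BijOn f s (Set.Iio #s) ∧ (∀ i ∉ s, f i = 0) ∧ x = fun i => (f i : ℝ)}

lemma zero_mem_permutohedronVertices_empty : (0 : ι → ℝ) ∈ permutohedronVertices (∅ : Finset ι) :=
  ⟨0, by simp, fun _ _ => rfl, by ext; simp⟩

variable [DecidableEq ι]

noncomputable def expectedWins (p : ι → ℝ) (s : Finset ι) (i : ι) : ℝ :=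
  if i ∈ s then ∑ j ∈ s.erase i, p i / (p i + p j) else 0

lemma single_add_mem_permutohedronVertices {s : Finset ι} {a : ι} (ha : a ∈ s) {x : ι → ℝ}
    (hx : x ∈ permutohedronVertices (s.erase a)) :
    (Pi.single a ((#s : ℝ) - 1) : ι → ℝ) + x ∈ permutohedronVertices s := by
  obtain ⟨f, hf, hf0, rfl⟩ := hx
  have hfa : f a = 0 := hf0 a (notMem_erase a s)
  refine ⟨Function.update f a #(s.erase a), ?_, fun i hi => ?_, ?_⟩
  · have hf' : Set.BijOn (Function.update f a #(s.erase a)) ↑(s.erase a) (Set.Iio #(s.erase a)) :=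
      hf.congr fun i hi => (Function.update_of_ne (ne_of_mem_erase hi) _ f).symm
    have h := hf'.insert (a := a) (by simp)
    rwa [Function.update_self, Set.Iio_insert, ← Set.Iio_add_one_eq_Iic, card_erase_add_one ha,
      ← coe_insert, insert_erase ha] at h
  · rw [Function.update_of_ne (ne_of_mem_of_not_mem ha hi).symm]
    exact hf0 i (fun h => hi (mem_of_mem_erase h))
  · ext i
    rcases eq_or_ne i a with rfl | hi
    · simp [hfa, cast_card_erase_of_mem ha]
    · simp [hi]

theorem expectedWins_erase_apply (p : ι → ℝ) {s : Finset ι} {a i : ι} (ha : a ∈ s) (hi : i ∈ s)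
    (hai : a ≠ i) :
    expectedWins p (s.erase a) i = expectedWins p s i - p i / (p i + p a) := by
  rw [expectedWins, if_pos (mem_erase.2 ⟨hai.symm, hi⟩), expectedWins, if_pos hi, erase_right_comm,
    sum_erase_eq_sub (mem_erase.2 ⟨hai, ha⟩)]

theorem expectedWins_eq_centerMass (p : ι → ℝ) {s : Finset ι} (hp : ∀ i ∈ s, 0 < p i)
    (hs : s.Nonempty) :
    expectedWins p s =
      s.centerMass p fun a =>
        (Pi.single a ((#s : ℝ) - 1) : ι → ℝ) + expectedWins p (s.erase a) := by
  rw [centerMass, eq_inv_smul_iff₀ (sum_pos hp hs).ne']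
  ext i
  simp only [Pi.smul_apply, Finset.sum_apply, Pi.add_apply, smul_eq_mul]
  by_cases hi : i ∈ s
  · have hterm : ∀ a ∈ s.erase i,
        p a * ((Pi.single a ((#s : ℝ) - 1) : ι → ℝ) i + expectedWins p (s.erase a) i) =
          p a * expectedWins p s i - p i + p i * (p i / (p i + p a)) := by
      intro a ha
      have hai := ne_of_mem_erase ha
      have hpos : p i + p a ≠ 0 := (add_pos (hp i hi) (hp a (mem_of_mem_erase ha))).ne'
      rw [Pi.single_eq_of_ne hai.symm, expectedWins_erase_apply p (mem_of_mem_erase ha) hi hai]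
      field_simp
      ring
    rw [← add_sum_erase s p hi, ← add_sum_erase s _ hi, sum_congr rfl hterm, sum_add_distrib,
      sum_sub_distrib, ← sum_mul, ← mul_sum, sum_const, nsmul_eq_mul, cast_card_erase_of_mem hi]
    simp only [expectedWins, if_pos hi, erase_idem, notMem_erase, if_false, Pi.single_eq_same]
    ring
  · have hzero : ∀ a ∈ s,
        (Pi.single a ((#s : ℝ) - 1) : ι → ℝ) i + expectedWins p (s.erase a) i = 0 := by
      intro a ha
      simp [expectedWins, Pi.single_eq_of_ne (ne_of_mem_of_not_mem ha hi).symm, hi]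
    rw [show expectedWins p s i = 0 from if_neg hi, mul_zero]
    exact (sum_eq_zero fun a ha => by rw [hzero a ha, mul_zero]).symm

theorem expectedWins_mem_convexHull (p : ι → ℝ) (s : Finset ι) (hp : ∀ i ∈ s, 0 < p i) :
    expectedWins p s ∈ convexHull ℝ (permutohedronVertices s) := by
  induction s using Finset.strongInduction with
  | H s ih =>
  rcases s.eq_empty_or_nonempty with rfl | hs
  · have : expectedWins p ∅ = 0 := by ext; simp [expectedWins]
    exact this ▸ subset_convexHull ℝ _ zero_mem_permutohedronVertices_empty
  rw [expectedWins_eq_centerMass p hp hs]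
  refine (convex_convexHull ℝ _).centerMass_mem (fun i hi => (hp i hi).le) (sum_pos hp hs)
    fun a ha => ?_
  have h := Set.vadd_mem_vadd_set (a := (Pi.single a ((#s : ℝ) - 1) : ι → ℝ))
    (ih _ (erase_ssubset ha) fun i hi => hp i (mem_of_mem_erase hi))
  rw [← convexHull_vadd] at h
  exact convexHull_mono
    (by rintro _ ⟨x, hx, rfl⟩; exact single_add_mem_permutohedronVertices ha hx) h

theorem sum_expectedWins (p : ι → ℝ) (s : Finset ι) (hp : ∀ i ∈ s, 0 < p i) :
    ∑ i ∈ s, expectedWins p s i = #s * ((#s : ℝ) - 1) / 2 := by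
  have hdef : ∑ i ∈ s, expectedWins p s i = ∑ i ∈ s, ∑ j ∈ s.erase i, p i / (p i + p j) :=
    sum_congr rfl fun i hi => if_pos hi
  have hswap : ∑ i ∈ s, ∑ j ∈ s.erase i, p j / (p j + p i) =
      ∑ i ∈ s, ∑ j ∈ s.erase i, p i / (p i + p j) :=
    sum_comm' fun i j => by simp only [mem_erase]; tauto
  have hpair : ∀ i ∈ s,
      ∑ j ∈ s.erase i, (p i / (p i + p j) + p j / (p j + p i)) = (#s : ℝ) - 1 := fun i hi => by
    rw [sum_congr rfl fun j hj => div_add_div_add_comm_eq_one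
      (add_pos (hp i hi) (hp j (mem_of_mem_erase hj))).ne', sum_const, nsmul_one,
      cast_card_erase_of_mem hi]
  have h2 : 2 * ∑ i ∈ s, expectedWins p s i = #s * ((#s : ℝ) - 1) := by
    rw [hdef, two_mul]
    nth_rw 2 [← hswap]
    rw [← sum_add_distrib, sum_congr rfl fun i _ => (sum_add_distrib).symm, sum_congr rfl hpair,
      sum_const, nsmul_eq_mul]
  linarith

lemma permutohedronVertices_univ_subset {m : ℕ} :
    permutohedronVertices (univ : Finset (Fin m)) ⊆
      {x | ∃ σ : Equiv.Perm (Fin m), ∀ i, x i = ((σ i : ℕ) : ℝ)} := by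
  rintro _ ⟨f, hf, -, rfl⟩
  have hlt : ∀ i, f i < m := fun i => by simpa using hf.mapsTo (mem_coe.2 (mem_univ i))
  have hinj : Function.Injective fun i => (⟨f i, hlt i⟩ : Fin m) :=
    fun i j h => hf.injOn (by simp) (by simp) (congrArg Fin.val h)
  exact ⟨Equiv.ofBijective _ (Finite.injective_iff_bijective.1 hinj), fun i => rfl⟩

theorem stmt_18_general (m : ℕ) (p : Fin m → ℝ)
    (hp : ∀ i, 0 < p i)
    (W : Fin m → ℝ)
    (hW : ∀ i, W i = ∑ j ∈ Finset.univ \ {i}, p i / (p i + p j)) :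
    W ∈ convexHull ℝ {x : Fin m → ℝ |
        ∃ σ : Equiv.Perm (Fin m), ∀ i, x i = ((σ i : ℕ) : ℝ)} ∧
      ∑ i, W i = m * (m - 1) / 2 := by
  obtain rfl : W = expectedWins p univ :=
    funext fun i => by simp [hW, expectedWins, sdiff_singleton_eq_erase]
  refine ⟨convexHull_mono permutohedronVertices_univ_subset
    (expectedWins_mem_convexHull p univ fun i _ => hp i), ?_⟩
  simpa using sum_expectedWins p univ fun i _ => hp i

/-- The point `W(p)` with `W_i(p) = ∑_{j≠i} p_i/(p_i+p_j)` lies in the permutohedron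
`P_{m-1}` and its coordinates sum to `m(m-1)/2`. -/
theorem stmt_18 (m : ℕ) (hm : 2 ≤ m) (p : Fin m → ℝ)
    (hp : ∀ i, 0 < p i) (hps : ∑ i, p i = 1)
    (W : Fin m → ℝ)
    (hW : ∀ i, W i = ∑ j ∈ Finset.univ \ {i}, p i / (p i + p j)) :
    W ∈ convexHull ℝ {x : Fin m → ℝ |
        ∃ σ : Equiv.Perm (Fin m), ∀ i, x i = ((σ i : ℕ) : ℝ)} ∧
      ∑ i, W i = m * (m - 1) / 2 :=
  stmt_18_general m p hp W hW
end
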